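/- For every d ≥ 1, the graph G_d is diamond-free, i.e., it contains no induced subgraph isomorphic to K_4 minus an edge. -/

import Mathlib

/-!
Every vertex of a triangle of `G_d` lies in the clique `W_d`; applied to the two triangles of a
diamond, this puts its two non-adjacent vertices into `W_d`, where they are adjacent.
For the first claim: `P_d` is triangle-free, because no two elements of `S^d` are adjacent and two
subdivision vertices are adjacent only when they subdivide the same edge, whose two ends are
distinct; a path vertex has at most one neighbour in `W_d`; and the path neighbours of `v_k` are
elements of `S^d`, hence pairwise non-adjacent.
-/

open SimpleGraph

/-- Sorted list of the tuple set `S^d`: tuples with entries in {1,3} except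
the last entry which is in {1,2,3,4}, of length between 1 and `d`,
listed in lexicographic order. -/
def Tl : ℕ → List (List ℕ)
  | 0 => []
  | k+1 => [[1]] ++ (Tl k).map (fun a => 1 :: a) ++ [[2], [3]]
            ++ (Tl k).map (fun a => 3 :: a) ++ [[4]]

/-- Strict lexicographic order on tuples (a proper prefix is smaller). -/
def lexLt (a b : List ℕ) : Prop := List.Lex (· < ·) a b

def lexLe (a b : List ℕ) : Prop := a = b ∨ lexLt a b

/-- `v` is the successor of `u` in the lexicographic order on `S^d`. -/
def IsSucc (d : ℕ) (u v : List ℕ) : Prop :=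
  v ∈ Tl d ∧ lexLt u v ∧ ∀ w ∈ Tl d, lexLt u w → lexLe v w

/-- The interval `[a,b]` in `S^d`. -/
def interval (d : ℕ) (a b : List ℕ) : Set (List ℕ) :=
  {c | c ∈ Tl d ∧ lexLe a c ∧ lexLe c b}

/-- `[a,b]` is a proper interval: no interior element has length `l(a)` or `l(b)`. -/
def ProperInterval (d : ℕ) (a b : List ℕ) : Prop :=
  a ∈ Tl d ∧ b ∈ Tl d ∧ lexLe a b ∧
  ∀ c ∈ interval d a b, c ≠ a → c ≠ b →
    c.length ≠ a.length ∧ c.length ≠ b.length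

/-- The set of left endpoints of flat steps of the interval `[a,b]`. -/
def flatSteps (d : ℕ) (a b : List ℕ) : Set (List ℕ) :=
  {c | c ∈ Tl d ∧ lexLe a c ∧ lexLt c b ∧ ∃ v, IsSucc d c v ∧ v.length = c.length}

/-- Vertices of `G_d`: elements of `S^d`, subdivision vertices, and centers. -/
inductive Vtx where
  | elt : List ℕ → Vtx
  | sub : ℕ → Fin 2 → Vtx
  | ctr : ℕ → Vtx
deriving DecidableEq

/-- The path `P_d` as a list of vertices: the elements of `S^d` in order,
with two subdivision vertices between consecutive elements of equal length
and one otherwise. -/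
def pathList (d : ℕ) : List Vtx :=
  ((List.range (Tl d).length).zip (Tl d)).flatMap (fun p =>
    Vtx.elt p.2 :: (match (Tl d)[p.1 + 1]? with
      | none => []
      | some b =>
        if p.2.length = b.length then [Vtx.sub p.1 0, Vtx.sub p.1 1]
        else [Vtx.sub p.1 0]))

/-- `x` and `y` are consecutive in the list `l`. -/
def ChainAdj {α : Type} (l : List α) (x y : α) : Prop :=
  ∃ i, (l[i]? = some x ∧ l[i+1]? = some y) ∨
       (l[i]? = some y ∧ l[i+1]? = some x)

/-- Adjacency from a center vertex. -/
def ctrAdj (d : ℕ) : Vtx → Vtx → Prop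
  | Vtx.ctr k, Vtx.ctr m => k ≠ m ∧ 1 ≤ k ∧ k ≤ d ∧ 1 ≤ m ∧ m ≤ d
  | Vtx.ctr k, Vtx.elt a => 1 ≤ k ∧ k ≤ d ∧ a ∈ Tl d ∧ a.length = k
  | _, _ => False

/-- The vertex set of `G_d`. -/
def VSet (d : ℕ) : Finset Vtx :=
  (pathList d).toFinset ∪ (Finset.Icc 1 d).image Vtx.ctr

def GdAdj (d : ℕ) (x y : Vtx) : Prop :=
  x ≠ y ∧ (ChainAdj (pathList d) x y ∨ ctrAdj d x y ∨ ctrAdj d y x)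

/-- The graph `G_d`. -/
def Gd (d : ℕ) : SimpleGraph {x // x ∈ VSet d} where
  Adj x y := GdAdj d x.1 y.1
  symm := ⟨by
    rintro x y ⟨hne, h⟩
    refine ⟨hne.symm, ?_⟩
    rcases h with ⟨i, hi⟩ | h | h
    · exact Or.inl ⟨i, hi.symm⟩
    · exact Or.inr (Or.inr h)
    · exact Or.inr (Or.inl h)⟩
  loopless := ⟨fun x h => h.1 rfl⟩

/-- A rank decomposition of a graph `G`: a finite cubic tree together with a
bijection from the vertices of `G` to the leaves of the tree. -/
structure RankDecomp {V : Type} [Fintype V] (G : SimpleGraph V) where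
  t : Type
  fin : Fintype t
  tree : SimpleGraph t
  conn : tree.Connected
  acyc : tree.IsAcyclic
  two_le : 2 ≤ Nat.card t
  cubic : ∀ v : t, (tree.neighborSet v).ncard = 1 ∨ (tree.neighborSet v).ncard = 3
  leafEquiv : V ≃ {v : t // (tree.neighborSet v).ncard = 1}

/-- The set of vertices of `G` whose leaf lies on the side of `a` of
the edge `ab` of the decomposition tree. -/
def RankDecomp.side {V : Type} [Fintype V] {G : SimpleGraph V}
    (D : RankDecomp G) (a b : D.t) : Set V :=
  {x | (D.tree.deleteEdges {s(a, b)}).Reachable (D.leafEquiv x).1 a}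

/-- The cutrank function of `G`: the GF(2)-rank of the adjacency submatrix
between `X` and its complement. -/
noncomputable def cutRank {V : Type} [Fintype V] (G : SimpleGraph V) (X : Set V) : ℕ :=
  haveI : Fintype ↥X := Fintype.ofFinite _
  haveI : Fintype ↥(Xᶜ) := Fintype.ofFinite _
  haveI : DecidableRel G.Adj := Classical.decRel _
  Matrix.rank (Matrix.of (fun (x : ↥X) (y : ↥(Xᶜ)) =>
    if G.Adj x.1 y.1 then (1 : ZMod 2) else 0))

/-- The decomposition `D` has width at most `k`. -/
def RankDecomp.WidthLE {V : Type} [Fintype V] {G : SimpleGraph V}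
    (D : RankDecomp G) (k : ℕ) : Prop :=
  ∀ a b : D.t, D.tree.Adj a b → cutRank G (D.side a b) ≤ k

/-- The rank-width of `G`. -/
noncomputable def rankwidth {V : Type} [Fintype V] (G : SimpleGraph V) : ℕ :=
  sInf {k | ∃ D : RankDecomp G, D.WidthLE k}

/-- `l` is an induced path in `G`: its vertices are distinct and two of them
are adjacent in `G` iff they are consecutive on `l`. -/
def IsInducedPathList {V : Type} (G : SimpleGraph V) (l : List V) : Prop :=
  l.Nodup ∧ ∀ x ∈ l, ∀ y ∈ l, (G.Adj x y ↔ ChainAdj l x y)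

/-- The diamond: the complete graph on four vertices minus an edge. -/
def diamond : SimpleGraph (Fin 4) := (⊤ : SimpleGraph (Fin 4)).deleteEdges {s(2, 3)}

theorem SimpleGraph.not_nonempty_diamond_embedding {V : Type*} {G : SimpleGraph V} {W : Set V}
    (hW : G.IsClique W) (htri : ∀ x y z, G.Adj x y → G.Adj y z → G.Adj x z → x ∈ W) :
    ¬ Nonempty (diamond ↪g G) := by
  rintro ⟨f⟩
  obtain ⟨h20, h01, h21, h30, h31, h23⟩ : diamond.Adj 2 0 ∧ diamond.Adj 0 1 ∧
      diamond.Adj 2 1 ∧ diamond.Adj 3 0 ∧ diamond.Adj 3 1 ∧ ¬ diamond.Adj 2 3 := by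
    simp [diamond]
  have h2 := htri _ _ _ (f.map_adj_iff.2 h20) (f.map_adj_iff.2 h01) (f.map_adj_iff.2 h21)
  have h3 := htri _ _ _ (f.map_adj_iff.2 h30) (f.map_adj_iff.2 h01) (f.map_adj_iff.2 h31)
  exact h23 (f.map_adj_iff.1 (hW h2 h3 (f.injective.ne (by decide))))

lemma nil_notMem_Tl : ∀ d, [] ∉ Tl d
  | 0 => List.not_mem_nil
  | k + 1 => by simp [Tl]

lemma Tl_nodup : ∀ d, (Tl d).Nodup
  | 0 => List.nodup_nil
  | k + 1 => by
    have h := Tl_nodup k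
    have hne := nil_notMem_Tl k
    simp [Tl, List.nodup_append, h.map, List.cons_injective]
    aesop

/-- `Vtx.sub i 0` and `Vtx.sub i 1` subdivide the edge between `L[i]` and `L[i + 1]`; the second
one exists only when these have the same length. -/
def PathStep (L : List (List ℕ)) : Vtx → Vtx → Prop
  | .elt a, .sub k j => j = 0 ∧ L[k]? = some a
  | .sub k j, .sub k' j' => j = 0 ∧ j' = 1 ∧ k' = k ∧
      ∃ a b, L[k]? = some a ∧ L[k + 1]? = some b ∧ a.length = b.length
  | .sub k j, .elt b =>
      L[k + 1]? = some b ∧ ∃ a, L[k]? = some a ∧ (j = 1 ↔ a.length = b.length)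
  | _, _ => False

def pathBlock (L : List (List ℕ)) (i : ℕ) (a : List ℕ) : List Vtx :=
  Vtx.elt a :: match L[i + 1]? with
    | none => []
    | some b => if a.length = b.length then [Vtx.sub i 0, Vtx.sub i 1] else [Vtx.sub i 0]

def subdividedPath (L : List (List ℕ)) : List Vtx :=
  ((List.range L.length).zip L).flatMap fun p => pathBlock L p.1 p.2

lemma pathList_eq (d : ℕ) : pathList d = subdividedPath (Tl d) := rfl

lemma isChain_pathBlock {L : List (List ℕ)} {i : ℕ} {a : List ℕ} (ha : L[i]? = some a) :
    List.IsChain (PathStep L) (pathBlock L i a) := by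
  unfold pathBlock
  split
  · simp
  · split <;> simp_all [PathStep]

lemma pathStep_getLast_head {L : List (List ℕ)} {i : ℕ} {a b : List ℕ} (ha : L[i]? = some a)
    (hb : L[i + 1]? = some b) :
    ∀ x ∈ (pathBlock L i a).getLast?, ∀ y ∈ (pathBlock L (i + 1) b).head?,
      PathStep L x y := by
  unfold pathBlock
  simp only [hb]
  split_ifs with hab <;> simp [PathStep, ha, hb, hab]

lemma isChain_subdividedPath (L : List (List ℕ)) :
    List.IsChain (PathStep L) (subdividedPath L) := by
  rw [subdividedPath, List.flatMap_def, List.isChain_flatten (by simp [pathBlock]),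
    List.isChain_map]
  refine ⟨?_, List.isChain_iff_getElem.2 fun i hi => ?_⟩
  · simp only [List.mem_map, forall_exists_index, and_imp]
    rintro _ p hp rfl
    obtain ⟨i, hi, rfl⟩ := List.mem_iff_getElem.1 hp
    simp only [List.getElem_zip, List.getElem_range]
    exact isChain_pathBlock (List.getElem?_eq_getElem _)
  · simp only [List.getElem_zip, List.getElem_range]
    exact pathStep_getLast_head (List.getElem?_eq_getElem _) (List.getElem?_eq_getElem _)

lemma List.IsChain.rel_of_getElem? {α : Type*} {R : α → α → Prop} {l : List α}
    (hl : l.IsChain R) {i : ℕ} {x y : α} (hx : l[i]? = some x) (hy : l[i + 1]? = some y) :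
    R x y := by
  obtain ⟨hi, rfl⟩ := List.getElem?_eq_some_iff.1 hy
  obtain ⟨-, rfl⟩ := List.getElem?_eq_some_iff.1 hx
  exact hl.getElem i hi

lemma ChainAdj.rel_or_rel {α : Type} {R : α → α → Prop} {l : List α} {x y : α}
    (h : ChainAdj l x y) (hl : l.IsChain R) : R x y ∨ R y x := by
  obtain ⟨i, ⟨hx, hy⟩ | ⟨hy, hx⟩⟩ := h
  exacts [.inl (hl.rel_of_getElem? hx hy), .inr (hl.rel_of_getElem? hy hx)]

def PathEdge (L : List (List ℕ)) (x y : Vtx) : Prop := PathStep L x y ∨ PathStep L y x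

section PathEdge

variable {L : List (List ℕ)} {x y z : Vtx}

lemma PathEdge.symm (h : PathEdge L x y) : PathEdge L y x := Or.symm h

lemma ChainAdj.pathEdge (h : ChainAdj (subdividedPath L) x y) : PathEdge L x y :=
  h.rel_or_rel (isChain_subdividedPath L)

@[simp] lemma not_pathEdge_ctr_left (k : ℕ) : ¬ PathEdge L (.ctr k) y := by
  cases y <;> simp [PathEdge, PathStep]

@[simp] lemma not_pathEdge_ctr_right (k : ℕ) : ¬ PathEdge L x (.ctr k) := fun h =>
  not_pathEdge_ctr_left k h.symm

@[simp] lemma not_pathEdge_elt_elt (a b : List ℕ) : ¬ PathEdge L (.elt a) (.elt b) := by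
  simp [PathEdge, PathStep]

lemma PathEdge.sub_sub {k m : ℕ} {b c : Fin 2} (h : PathEdge L (.sub k b) (.sub m c)) :
    m = k ∧ b ≠ c ∧
      ∃ a a', L[k]? = some a ∧ L[k + 1]? = some a' ∧ a.length = a'.length := by
  rcases h with ⟨rfl, rfl, rfl, h⟩ | ⟨rfl, rfl, rfl, h⟩ <;> simpa using h

lemma PathEdge.getElem?_add_eq {k : ℕ} {j : Fin 2} {e a a' : List ℕ} (ha : L[k]? = some a)
    (ha' : L[k + 1]? = some a') (hlen : a.length = a'.length) (h : PathEdge L (.elt e) (.sub k j)) :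
    L[k + j]? = some e := by
  fin_cases j <;> rcases h with h | h <;> simp only [PathStep] at h <;> grind

lemma PathEdge.not_triangle_elt_sub_sub (hL : L.Nodup) {e : List ℕ} {k m : ℕ} {b c : Fin 2}
    (hb : PathEdge L (.elt e) (.sub k b)) (hc : PathEdge L (.elt e) (.sub m c))
    (hbc : PathEdge L (.sub k b) (.sub m c)) : False := by
  obtain ⟨rfl, hne, a, a', ha, ha', hlen⟩ := hbc.sub_sub
  have hkb := hb.getElem?_add_eq ha ha' hlen
  have hkc := hc.getElem?_add_eq ha ha' hlen
  have := (List.getElem?_inj (List.getElem?_eq_some_iff.1 hkb).1 hL).1 (hkb.trans hkc.symm)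
  omega

lemma PathEdge.not_triangle_sub_sub_sub {k m p : ℕ} {b c q : Fin 2}
    (hbc : PathEdge L (.sub k b) (.sub m c)) (hcq : PathEdge L (.sub m c) (.sub p q))
    (hbq : PathEdge L (.sub k b) (.sub p q)) : False := by
  have := hbc.sub_sub.2.1
  have := hcq.sub_sub.2.1
  have := hbq.sub_sub.2.1
  omega

lemma PathEdge.not_triangle (hL : L.Nodup) (hxy : PathEdge L x y) (hyz : PathEdge L y z)
    (hxz : PathEdge L x z) : False := by
  rcases x with _ | ⟨_, _⟩ | _ <;> rcases y with _ | ⟨_, _⟩ | _ <;>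
    rcases z with _ | ⟨_, _⟩ | _ <;>
    try simp only [not_pathEdge_ctr_left, not_pathEdge_ctr_right, not_pathEdge_elt_elt]
      at hxy hyz hxz
  · exact not_triangle_elt_sub_sub hL hxy hxz hyz
  · exact not_triangle_elt_sub_sub hL hxy.symm hyz hxz
  · exact not_triangle_elt_sub_sub hL hxz.symm hyz.symm hxy
  · exact not_triangle_sub_sub_sub hxy hyz hxz

end PathEdge

lemma ctr_notMem_subdividedPath (L : List (List ℕ)) (k : ℕ) :
    Vtx.ctr k ∉ subdividedPath L := by
  simp only [subdividedPath, List.mem_flatMap, not_exists, not_and]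
  intro p _
  unfold pathBlock
  split <;> (try split_ifs) <;> simp

lemma ctr_mem_VSet {d k : ℕ} : Vtx.ctr k ∈ VSet d ↔ 1 ≤ k ∧ k ≤ d := by
  simp [VSet, pathList_eq, ctr_notMem_subdividedPath]

section GdAdj

variable {d : ℕ} {x y z : Vtx}

lemma GdAdj.symm (h : GdAdj d x y) : GdAdj d y x :=
  ⟨h.1.symm, h.2.imp (fun ⟨i, hi⟩ => ⟨i, hi.symm⟩) Or.symm⟩

lemma not_ctrAdj_of_notMem_range (hx : x ∉ Set.range Vtx.ctr) (y : Vtx) : ¬ ctrAdj d x y := by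
  cases x <;> simp_all [ctrAdj]

lemma GdAdj.pathEdge (h : GdAdj d x y) (hx : x ∉ Set.range Vtx.ctr)
    (hy : y ∉ Set.range Vtx.ctr) :
    PathEdge (Tl d) x y := by
  rcases h.2 with h | h | h
  · exact ChainAdj.pathEdge h
  · exact absurd h (not_ctrAdj_of_notMem_range hx y)
  · exact absurd h (not_ctrAdj_of_notMem_range hy x)

lemma GdAdj.exists_elt_of_ctr {k : ℕ} (h : GdAdj d (.ctr k) x) (hx : x ∉ Set.range Vtx.ctr) :
    ∃ a, x = .elt a ∧ a.length = k := by
  rcases h.2 with h | h | h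
  · exact absurd (ChainAdj.pathEdge h) (not_pathEdge_ctr_left k)
  · cases x <;> simp_all [ctrAdj]
  · exact absurd h (not_ctrAdj_of_notMem_range hx _)

lemma GdAdj.mem_range_ctr_of_triangle (hxy : GdAdj d x y) (hyz : GdAdj d y z)
    (hxz : GdAdj d x z) : x ∈ Set.range Vtx.ctr := by
  by_contra hx
  by_cases hy : y ∈ Set.range Vtx.ctr <;> by_cases hz : z ∈ Set.range Vtx.ctr
  · obtain ⟨k, rfl⟩ := hy
    obtain ⟨m, rfl⟩ := hz
    obtain ⟨a, rfl, rfl⟩ := hxy.symm.exists_elt_of_ctr hx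
    obtain ⟨_, ⟨⟩, rfl⟩ := hxz.symm.exists_elt_of_ctr hx
    exact hyz.1 rfl
  · obtain ⟨k, rfl⟩ := hy
    obtain ⟨a, rfl, -⟩ := hxy.symm.exists_elt_of_ctr hx
    obtain ⟨b, rfl, -⟩ := hyz.exists_elt_of_ctr hz
    exact not_pathEdge_elt_elt a b (hxz.pathEdge hx hz)
  · obtain ⟨k, rfl⟩ := hz
    obtain ⟨a, rfl, -⟩ := hxz.symm.exists_elt_of_ctr hx
    obtain ⟨b, rfl, -⟩ := hyz.symm.exists_elt_of_ctr hy
    exact not_pathEdge_elt_elt a b (hxy.pathEdge hx hy)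
  · exact (hxy.pathEdge hx hy).not_triangle (Tl_nodup d) (hyz.pathEdge hy hz) (hxz.pathEdge hx hz)

end GdAdj

lemma Gd_isClique_ctr (d : ℕ) : (Gd d).IsClique {x | x.1 ∈ Set.range Vtx.ctr} := by
  rintro ⟨_, hx⟩ ⟨k, rfl⟩ ⟨_, hy⟩ ⟨m, rfl⟩ hne
  have hkm : k ≠ m := fun h => hne (by subst h; rfl)
  obtain ⟨hk, hkd⟩ := ctr_mem_VSet.1 hx
  obtain ⟨hm, hmd⟩ := ctr_mem_VSet.1 hy
  exact ⟨by simpa using hkm, .inr (.inl ⟨hkm, hk, hkd, hm, hmd⟩)⟩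

theorem stmt8_general (d : ℕ) : ¬ Nonempty (diamond ↪g Gd d) :=
  SimpleGraph.not_nonempty_diamond_embedding (Gd_isClique_ctr d) fun _ _ _ =>
    GdAdj.mem_range_ctr_of_triangle

/-- For `d ≥ 1` the graph `G_d` is diamond-free. -/
theorem stmt8 (d : ℕ) (hd : 1 ≤ d) : ¬ Nonempty (diamond ↪g Gd d) :=
  stmt8_general d
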